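/- arXiv:1106.4778 — 2 statements merged into one kernel-verified Lean document; each statement's English description precedes it below -/
import Mathlib

section
/- Every connected countably infinite graph that is primitive and has infinite diameter has distinguishing number 2. -/
open SimpleGraph

section Aux

variable {V : Type*} {G : SimpleGraph V}

lemma walk_split {u v : V} (p : G.Walk u v) (s : ℕ) (hs : s ≤ p.length) :
    ∃ (w : V) (q : G.Walk u w) (r : G.Walk w v), q.length = s ∧ r.length = p.length - s := by
  induction p generalizing s with
  | nil =>
    have : s = 0 := by simpa using hs
    subst this
    exact ⟨_, .nil, .nil, rfl, by simp⟩
  | @cons u w' v h p ih =>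
    cases s with
    | zero => exact ⟨u, .nil, .cons h p, rfl, by simp⟩
    | succ s =>
      obtain ⟨w, q, r, hq, hr⟩ := ih s (by simpa using hs)
      refine ⟨w, .cons h q, r, by simp [hq], by simp [hr]⟩

lemma dist_intermediate (hconn : G.Connected) {u v : V} {s : ℕ} (hs : s ≤ G.dist u v) :
    ∃ w, G.dist u w = s ∧ G.dist w v = G.dist u v - s := by
  obtain ⟨p, hp⟩ := hconn.exists_walk_length_eq_dist u v
  obtain ⟨w, q, r, hq, hr⟩ := walk_split p s (by omega)
  have h1 : G.dist u w ≤ s := hq ▸ SimpleGraph.dist_le q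
  have h2 : G.dist w v ≤ p.length - s := hr ▸ SimpleGraph.dist_le r
  have h3 : G.dist u v ≤ G.dist u w + G.dist w v := hconn.dist_triangle
  exact ⟨w, by omega, by omega⟩

lemma iso_dist (hconn : G.Connected) (g : G ≃g G) (u v : V) :
    G.dist (g u) (g v) = G.dist u v := by
  apply le_antisymm
  · obtain ⟨p, hp⟩ := hconn.exists_walk_length_eq_dist u v
    have := SimpleGraph.dist_le (p.map g.toHom)
    rwa [SimpleGraph.Walk.length_map, hp] at this
  · obtain ⟨p, hp⟩ := hconn.exists_walk_length_eq_dist (g u) (g v)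
    have := SimpleGraph.dist_le (p.map g.symm.toHom)
    rw [SimpleGraph.Walk.length_map, hp] at this
    simpa using this

end Aux

def IsPrimitiveGraph {V : Type*} (G : SimpleGraph V) : Prop :=
  (∀ u v : V, ∃ g : G ≃g G, g u = v) ∧
  ∀ r : V → V → Prop, Equivalence r →
    (∀ (g : G ≃g G) (x y : V), r x y → r (g x) (g y)) →
    (∀ x y : V, r x y → x = y) ∨ (∀ x y : V, r x y)

/-- The distinguishing number of a graph: the least `n` such that some coloring of the
vertices by `n` colors is preserved by no nonidentity automorphism. -/
noncomputable def distinguishingNumber {V : Type*} (G : SimpleGraph V) : ℕ :=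
  sInf {n : ℕ | ∃ c : V → Fin n, ∀ g : G ≃g G, (∀ v : V, c (g v) = c v) → ∀ v : V, g v = v}

/-- Every connected denumerable primitive graph with infinite diameter has
distinguishing number 2. -/
theorem stmt3 {V : Type*} [Countable V] [Infinite V] (G : SimpleGraph V)
    (hconn : G.Connected) (hprim : IsPrimitiveGraph G)
    (hdiam : ∀ n : ℕ, ∃ u v : V, n ≤ G.dist u v) :
    distinguishingNumber G = 2 := by
  classical
  obtain ⟨htrans, hprim2⟩ := hprim
  -- spheres of every radius around every vertex are nonempty
  have sphere : ∀ (x : V) (s : ℕ), ∃ z, G.dist x z = s := by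
    intro x s
    obtain ⟨u, v, huv⟩ := hdiam s
    obtain ⟨w, hw, -⟩ := dist_intermediate hconn huv
    obtain ⟨g, hg⟩ := htrans u x
    refine ⟨g w, ?_⟩
    rw [← hg, iso_dist hconn, hw]
  -- Key lemma: distinct vertices are distinguished by arbitrarily far vertices
  have keyA : ∀ x y : V, x ≠ y → ∀ R : ℕ, ∃ z, R < G.dist x z ∧ G.dist x z ≠ G.dist y z := by
    intro x y hxy R
    by_contra hcon
    push_neg at hcon
    set s := R + G.dist x y + 1 with hs
    set r : V → V → Prop := fun p q => ∀ z, G.dist p z = s ↔ G.dist q z = s with hrdef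
    have hequiv : Equivalence r :=
      ⟨fun p z => Iff.rfl, fun h z => (h z).symm, fun h1 h2 z => (h1 z).trans (h2 z)⟩
    have hinv : ∀ (g : G ≃g G) (p q : V), r p q → r (g p) (g q) := by
      intro g p q h
      intro z
      have e : g (g.symm z) = z := RelIso.apply_symm_apply g z
      rw [← e, iso_dist hconn g p (g.symm z), iso_dist hconn g q (g.symm z)]
      exact h (g.symm z)
    rcases hprim2 r hequiv hinv with htriv | htot
    · have hrxy : r x y := by
        intro z
        constructor
        · intro hz
          have hR : R < G.dist x z := by omega
          rw [← hcon z hR]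
          exact hz
        · intro hz
          have htri : G.dist y z ≤ G.dist y x + G.dist x z := hconn.dist_triangle
          rw [G.dist_comm (u := y) (v := x)] at htri
          have hR : R < G.dist x z := by omega
          rw [hcon z hR]
          exact hz
      exact hxy (htriv x y hrxy)
    · obtain ⟨z0, hz0⟩ := sphere x s
      have h2 := (htot x z0 z0).mp hz0
      rw [SimpleGraph.dist_self] at h2
      omega
  -- pick a base vertex
  obtain ⟨v0⟩ : Nonempty V := inferInstance
  -- witness lemma
  have W : ∀ (x y : V) (K : ℕ), ∃ z, K < G.dist v0 z ∧
      (x ≠ y → G.dist x z ≠ G.dist y z) := by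
    intro x y K
    by_cases hxy : x = y
    · obtain ⟨z, hz⟩ := sphere v0 (K + 1)
      exact ⟨z, by omega, fun h => absurd hxy h⟩
    · obtain ⟨z, hz1, hz2⟩ := keyA x y hxy (K + G.dist v0 x)
      refine ⟨z, ?_, fun _ => hz2⟩
      have htri : G.dist x z ≤ G.dist x v0 + G.dist v0 z := hconn.dist_triangle
      rw [G.dist_comm (u := x) (v := v0)] at htri
      omega
  -- anchor pair
  obtain ⟨a', ha'⟩ := sphere v0 3
  obtain ⟨a, ha, haa'⟩ := dist_intermediate hconn (show 2 ≤ G.dist v0 a' by omega)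
  rw [ha'] at haa'
  have haa' : G.dist a a' = 1 := by omega
  -- haa' : G.dist a a' = 1
  -- enumeration of pairs
  obtain ⟨f, hf⟩ := exists_surjective_nat (V × V)
  -- the sequence of witnesses
  obtain ⟨Z, hZ0, hZstep, hwit⟩ : ∃ Z : ℕ → V, 6 < G.dist v0 (Z 0) ∧
      (∀ i, G.dist v0 (Z i) + 1 < G.dist v0 (Z (i + 1))) ∧
      (∀ i, (f i).1 ≠ (f i).2 → G.dist (f i).1 (Z i) ≠ G.dist (f i).2 (Z i)) := by
    refine ⟨fun n => Nat.rec ((W (f 0).1 (f 0).2 6).choose)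
      (fun i zi => (W (f (i + 1)).1 (f (i + 1)).2 (G.dist v0 zi + 1)).choose) n, ?_, ?_, ?_⟩
    · exact ((W (f 0).1 (f 0).2 6).choose_spec).1
    · intro i
      exact ((W (f (i + 1)).1 (f (i + 1)).2 _).choose_spec).1
    · intro i
      cases i with
      | zero => exact ((W (f 0).1 (f 0).2 6).choose_spec).2
      | succ i => exact ((W (f (i + 1)).1 (f (i + 1)).2 _).choose_spec).2
  have hbig : ∀ i : ℕ, 7 ≤ G.dist v0 (Z i) := by
    intro i
    induction i with
    | zero => omega
    | succ i ih => have := hZstep i; omega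
  have hmono : ∀ i j : ℕ, i < j → G.dist v0 (Z i) + 2 ≤ G.dist v0 (Z j) := by
    intro i j hij
    induction j with
    | zero => omega
    | succ j ih =>
      have hstep := hZstep j
      rcases Nat.lt_or_ge i j with h | h
      · have := ih h; omega
      · have : i = j := by omega
        subst this; omega
  -- distance facts
  have dva : G.dist v0 a = 2 := ha
  have dva' : G.dist v0 a' = 3 := ha'
  have daz : ∀ i, 5 ≤ G.dist a (Z i) := by
    intro i
    have htri : G.dist v0 (Z i) ≤ G.dist v0 a + G.dist a (Z i) := hconn.dist_triangle
    have := hbig i; omega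
  have da'z : ∀ i, 4 ≤ G.dist a' (Z i) := by
    intro i
    have htri : G.dist v0 (Z i) ≤ G.dist v0 a' + G.dist a' (Z i) := hconn.dist_triangle
    have := hbig i; omega
  have dzz : ∀ i j, i ≠ j → 2 ≤ G.dist (Z i) (Z j) := by
    intro i j hij
    rcases Nat.lt_or_ge i j with h | h
    · have htri : G.dist v0 (Z j) ≤ G.dist v0 (Z i) + G.dist (Z i) (Z j) := hconn.dist_triangle
      have := hmono i j h; omega
    · have h' : j < i := by omega
      have htri : G.dist v0 (Z i) ≤ G.dist v0 (Z j) + G.dist (Z j) (Z i) := hconn.dist_triangle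
      have := hmono j i h'
      rw [G.dist_comm (u := Z i) (v := Z j)]
      omega
  -- classification of black pairs at distance one
  have hone : ∀ u w : V,
      (u = v0 ∨ u = a ∨ u = a' ∨ ∃ i, Z i = u) →
      (w = v0 ∨ w = a ∨ w = a' ∨ ∃ i, Z i = w) →
      G.dist u w = 1 → (u = a ∧ w = a') ∨ (u = a' ∧ w = a) := by
    intro u w hu hw hd
    rcases hu with hu | hu | hu | ⟨i, hu⟩ <;> rcases hw with hw | hw | hw | ⟨j, hw⟩ <;>
        subst hu <;> subst hw
    · rw [SimpleGraph.dist_self] at hd; omega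
    · rw [dva] at hd; omega
    · rw [dva'] at hd; omega
    · have := hbig j; omega
    · rw [G.dist_comm, dva] at hd; omega
    · rw [SimpleGraph.dist_self] at hd; omega
    · exact Or.inl ⟨rfl, rfl⟩
    · have := daz j; omega
    · rw [G.dist_comm, dva'] at hd; omega
    · exact Or.inr ⟨rfl, rfl⟩
    · rw [SimpleGraph.dist_self] at hd; omega
    · have := da'z j; omega
    · rw [G.dist_comm] at hd; have := hbig i; omega
    · rw [G.dist_comm] at hd; have := daz i; omega
    · rw [G.dist_comm] at hd; have := da'z i; omega
    · by_cases hij : i = j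
      · subst hij; rw [SimpleGraph.dist_self] at hd; omega
      · have := dzz i j hij; omega
  -- the coloring is distinguishing
  have hmain : ∀ g : G ≃g G,
      (∀ v : V, (if (g v = v0 ∨ g v = a ∨ g v = a' ∨ ∃ i, Z i = g v) then (0 : Fin 2) else 1)
        = (if (v = v0 ∨ v = a ∨ v = a' ∨ ∃ i, Z i = v) then (0 : Fin 2) else 1)) →
      ∀ v : V, g v = v := by
    intro g hg
    have hpres : ∀ v : V, (v = v0 ∨ v = a ∨ v = a' ∨ ∃ i, Z i = v) →
        (g v = v0 ∨ g v = a ∨ g v = a' ∨ ∃ i, Z i = g v) := by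
      intro v hv
      have hx := hg v
      rw [if_pos hv] at hx
      by_contra h1
      rw [if_neg h1] at hx
      exact absurd hx (by decide)
    have hga := hpres a (Or.inr (Or.inl rfl))
    have hga' := hpres a' (Or.inr (Or.inr (Or.inl rfl)))
    have hgv0B := hpres v0 (Or.inl rfl)
    have hgaa' : G.dist (g a) (g a') = 1 := by rw [iso_dist hconn]; exact haa'
    have hcase := hone _ _ hga hga' hgaa'
    have hgv0 : g v0 = v0 := by
      have e1 : G.dist (g v0) (g a) = 2 := by rw [iso_dist hconn]; exact dva
      rcases hgv0B with h | h | h | ⟨i, h⟩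
      · exact h
      · exfalso
        rcases hcase with ⟨h2, -⟩ | ⟨h2, -⟩
        · rw [h, h2, SimpleGraph.dist_self] at e1; omega
        · rw [h, h2, haa'] at e1; omega
      · exfalso
        rcases hcase with ⟨h2, -⟩ | ⟨h2, -⟩
        · rw [h, h2, G.dist_comm, haa'] at e1; omega
        · rw [h, h2, SimpleGraph.dist_self] at e1; omega
      · exfalso
        rcases hcase with ⟨h2, -⟩ | ⟨h2, -⟩
        · rw [← h, h2, G.dist_comm] at e1
          have := daz i; omega
        · rw [← h, h2, G.dist_comm] at e1
          have := da'z i; omega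
    have hDfix : ∀ x : V, G.dist v0 (g x) = G.dist v0 x := by
      intro x
      conv_lhs => rw [← hgv0]
      rw [iso_dist hconn]
    have hZfix : ∀ i, g (Z i) = Z i := by
      intro i
      have hm := hpres (Z i) (Or.inr (Or.inr (Or.inr ⟨i, rfl⟩)))
      have hd : G.dist v0 (g (Z i)) = G.dist v0 (Z i) := hDfix (Z i)
      rcases hm with h | h | h | ⟨j, h⟩
      · rw [h, SimpleGraph.dist_self] at hd; have := hbig i; omega
      · rw [h, dva] at hd; have := hbig i; omega
      · rw [h, dva'] at hd; have := hbig i; omega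
      · rw [← h] at hd
        have hij : j = i := by
          by_contra hij
          rcases Nat.lt_or_ge j i with hlt | hge
          · have := hmono j i hlt; omega
          · have hlt : i < j := by omega
            have := hmono i j hlt; omega
        rw [hij] at h
        exact h.symm
    intro v
    by_contra hne
    obtain ⟨i, hi⟩ := hf (v, g v)
    have h1 : (f i).1 = v := by rw [hi]
    have h2 : (f i).2 = g v := by rw [hi]
    have hz := hwit i
    rw [h1, h2] at hz
    have hz' := hz (fun h => hne h.symm)
    have heq : G.dist (g v) (Z i) = G.dist v (Z i) := by
      conv_lhs => rw [← hZfix i]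
      rw [iso_dist hconn]
    exact hz' heq.symm
  -- conclude
  have h2S : (2 : ℕ) ∈ {n : ℕ | ∃ c : V → Fin n, ∀ g : G ≃g G,
      (∀ v : V, c (g v) = c v) → ∀ v : V, g v = v} :=
    ⟨fun v => if (v = v0 ∨ v = a ∨ v = a' ∨ ∃ i, Z i = v) then (0 : Fin 2) else 1,
      fun g hg => hmain g hg⟩
  have hlow : ∀ m : ℕ, m ∈ {n : ℕ | ∃ c : V → Fin n, ∀ g : G ≃g G,
      (∀ v : V, c (g v) = c v) → ∀ v : V, g v = v} → 2 ≤ m := by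
    intro m hm
    obtain ⟨c', hc'⟩ := hm
    by_contra hb
    push_neg at hb
    interval_cases m
    · exact (c' v0).elim0
    · obtain ⟨u, w, huw⟩ := exists_pair_ne V
      obtain ⟨g, hgu⟩ := htrans u w
      have hfix := hc' g (fun v => Subsingleton.elim _ _) u
      rw [hfix] at hgu
      exact huw hgu
  have hne : ({n : ℕ | ∃ c : V → Fin n, ∀ g : G ≃g G,
      (∀ v : V, c (g v) = c v) → ∀ v : V, g v = v}).Nonempty := ⟨2, h2S⟩
  exact le_antisymm (Nat.sInf_le h2S) (hlow _ (Nat.sInf_mem hne))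
end

section
/- Every countably infinite vertex-transitive graph of connectivity 1 has distinguishing number 2. -/
open Finset

lemma exists_seq_of_forall_finset {α : Type*} [DecidableEq α]
    {P : Finset α → ℕ → (ℕ → α) → Prop} (h : ∀ F k, ∃ a, P F k a) :
    ∃ A : ℕ → ℕ → α, ∀ k, P ((range k).biUnion fun j => (Iic j).image (A j)) k (A k) := by
  choose f hf using h
  let F : ℕ → Finset α := fun k => Nat.rec ∅ (fun k F => F ∪ (Iic k).image (f F k)) k
  have hF : ∀ k, F k = (range k).biUnion fun j => (Iic j).image (f (F j) j) := by
    intro k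
    induction k with
    | zero => rfl
    | succ k ih => rw [range_add_one, biUnion_insert, ← ih, union_comm]
  exact ⟨fun k => f (F k) k, fun k => hF k ▸ hf _ _⟩

namespace SimpleGraph

variable {V W : Type*} {G : SimpleGraph V} {G' : SimpleGraph W}

lemma dist_map_le (f : G →g G') {u v : V} (h : G.Reachable u v) :
    G'.dist (f u) (f v) ≤ G.dist u v := by
  obtain ⟨p, hp⟩ := h.exists_walk_length_eq_dist
  simpa [hp] using dist_le (p.map f)

lemma Iso.dist_eq (φ : G ≃g G') (u v : V) : G'.dist (φ u) (φ v) = G.dist u v := by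
  by_cases h : G.Reachable u v
  · refine le_antisymm (dist_map_le φ.toHom h) ?_
    simpa using dist_map_le φ.symm.toHom (u := φ u) (v := φ v) (Iso.reachable_iff.2 h)
  · rw [dist_eq_zero_of_not_reachable h,
      dist_eq_zero_of_not_reachable (mt Iso.reachable_iff.1 h)]

def ReachableAvoiding (G : SimpleGraph V) (w a b : V) : Prop :=
  ∃ p : G.Walk a b, w ∉ p.support

namespace ReachableAvoiding

variable {w a b c : V}

lemma refl (ha : a ≠ w) : G.ReachableAvoiding w a a :=
  ⟨.nil, by simpa [eq_comm] using ha⟩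

lemma symm (h : G.ReachableAvoiding w a b) : G.ReachableAvoiding w b a :=
  let ⟨p, hp⟩ := h; ⟨p.reverse, by simpa using hp⟩

lemma trans (hab : G.ReachableAvoiding w a b) (hbc : G.ReachableAvoiding w b c) :
    G.ReachableAvoiding w a c :=
  let ⟨p, hp⟩ := hab; let ⟨q, hq⟩ := hbc; ⟨p.append q, by simp [hp, hq]⟩

lemma of_adj (hab : G.Adj a b) (ha : a ≠ w) (hb : b ≠ w) : G.ReachableAvoiding w a b :=
  ⟨hab.toWalk, by simp [ha.symm, hb.symm]⟩

lemma map (φ : G ≃g G') (h : G.ReachableAvoiding w a b) :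
    G'.ReachableAvoiding (φ w) (φ a) (φ b) :=
  let ⟨p, hp⟩ := h; ⟨p.map φ.toHom, by simpa using hp⟩

lemma reachable_induce (h : G.ReachableAvoiding w a b) (ha : a ≠ w) (hb : b ≠ w) :
    (G.induce {v | v ≠ w}).Reachable ⟨a, ha⟩ ⟨b, hb⟩ :=
  let ⟨p, hp⟩ := h; ⟨p.induce {v | v ≠ w} fun _ hx h => hp (h ▸ hx)⟩

end ReachableAvoiding

variable {w a b : V}

lemma reachableAvoiding_of_dist_lt (hab : G.Reachable a b) (hw : G.dist a b < G.dist a w) :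
    G.ReachableAvoiding w a b := by
  classical
  obtain ⟨p, hp⟩ := hab.exists_walk_length_eq_dist
  refine ⟨p, fun hmem => ?_⟩
  have := (dist_le (p.takeUntil w hmem)).trans (p.length_takeUntil_le_length hmem)
  omega

lemma dist_eq_add_of_not_reachableAvoiding (hab : G.Reachable a b)
    (h : ¬ G.ReachableAvoiding w a b) : G.dist a b = G.dist a w + G.dist w b := by
  classical
  obtain ⟨p, hp⟩ := hab.exists_walk_length_eq_dist
  have hw : w ∈ p.support := by_contra fun hw => h ⟨p, hw⟩
  refine le_antisymm (Reachable.dist_triangle_left ⟨p.takeUntil w hw⟩ b) ?_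
  calc G.dist a w + G.dist w b ≤ (p.takeUntil w hw).length + (p.dropUntil w hw).length :=
        add_le_add (dist_le _) (dist_le _)
    _ = G.dist a b := by rw [← Walk.length_append, p.take_spec hw, hp]

lemma reachableAvoiding_of_adj_seq {r : ℕ → V} (hr : ∀ m, G.Adj (r m) (r (m + 1))) {n m : ℕ}
    (hnm : n ≤ m) (hw : ∀ k, n ≤ k → k ≤ m → r k ≠ w) : G.ReachableAvoiding w (r n) (r m) := by
  induction m, hnm using Nat.le_induction with
  | base => exact .refl (hw n le_rfl le_rfl)
  | succ m hnm ih =>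
    exact (ih fun k hk hkm => hw k hk (by omega)).trans
      (.of_adj (hr m) (hw m hnm (by omega)) (hw (m + 1) (by omega) le_rfl))

def IsCutVertex (G : SimpleGraph V) (w : V) : Prop :=
  ∃ a b, a ≠ w ∧ b ≠ w ∧ ¬ G.ReachableAvoiding w a b

lemma isCutVertex_of_not_connected_induce [Nontrivial V]
    (h : ¬ (G.induce {v | v ≠ w}).Connected) : G.IsCutVertex w := by
  obtain ⟨x, hx⟩ := exists_ne w
  have : Nonempty {v | v ≠ w} := ⟨⟨x, hx⟩⟩
  have hpre : ¬ (G.induce {v | v ≠ w}).Preconnected := fun hpre => h ⟨hpre⟩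
  simp only [Preconnected, not_forall] at hpre
  obtain ⟨⟨a, ha⟩, ⟨b, hb⟩, hab⟩ := hpre
  exact ⟨a, b, ha, hb, fun h => hab (h.reachable_induce ha hb)⟩

lemma IsCutVertex.map (φ : G ≃g G') (h : G.IsCutVertex w) : G'.IsCutVertex (φ w) := by
  obtain ⟨a, b, ha, hb, hab⟩ := h
  refine ⟨φ a, φ b, φ.injective.ne ha, φ.injective.ne hb, fun h => hab ?_⟩
  simpa using h.map φ.symm

lemma IsCutVertex.exists_not_reachableAvoiding (h : G.IsCutVertex w) (x : V) :
    ∃ z, z ≠ w ∧ ¬ G.ReachableAvoiding w x z := by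
  obtain ⟨a, b, ha, hb, hab⟩ := h
  by_cases hxa : G.ReachableAvoiding w x a
  · exact ⟨b, hb, fun hxb => hab (hxa.symm.trans hxb)⟩
  · exact ⟨a, ha, hxa⟩

lemma exists_adj_reachableAvoiding {z : V} (h : G.Reachable z w) (hz : z ≠ w) :
    ∃ y, G.Adj w y ∧ G.ReachableAvoiding w z y := by
  obtain ⟨p⟩ := h
  induction p with
  | nil => exact absurd rfl hz
  | @cons z c w hzc q ih =>
    by_cases hc : c = w
    · subst hc
      exact ⟨z, hzc.symm, .refl hz⟩
    · obtain ⟨y, hy, hcy⟩ := ih hc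
      exact ⟨y, hy, (ReachableAvoiding.of_adj hzc hz hc).trans hcy⟩

lemma IsCutVertex.exists_adj_not_reachableAvoiding (hconn : G.Connected) (h : G.IsCutVertex w)
    (x : V) : ∃ y, G.Adj w y ∧ ¬ G.ReachableAvoiding w x y := by
  obtain ⟨z, hz, hxz⟩ := h.exists_not_reachableAvoiding x
  obtain ⟨y, hy, hzy⟩ := exists_adj_reachableAvoiding (hconn z w) hz
  exact ⟨y, hy, fun hxy => hxz (hxy.trans hzy.symm)⟩

lemma exists_ray_of_adj (hconn : G.Connected) (hcut : ∀ w, G.IsCutVertex w) {b c : V}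
    (hbc : G.Adj b c) :
    ∃ r : ℕ → V, r 0 = b ∧ r 1 = c ∧ (∀ m, G.Adj (r m) (r (m + 1))) ∧
      (∀ m, G.dist b (r m) = m) ∧ ∀ m, ¬ G.ReachableAvoiding (r m) b (r (m + 1)) := by
  choose next hnext using fun x => (hcut x).exists_adj_not_reachableAvoiding hconn b
  let r : ℕ → V := fun m => Nat.rec b (fun m x => if m = 0 then c else next x) m
  have hr : ∀ m, 0 < m → r (m + 1) = next (r m) := fun m hm => if_neg hm.ne'
  have hadj : ∀ m, G.Adj (r m) (r (m + 1)) := by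
    rintro (_ | m)
    · exact hbc
    · rw [hr _ m.succ_pos]; exact (hnext _).1
  have hsep : ∀ m, ¬ G.ReachableAvoiding (r m) b (r (m + 1)) := by
    rintro (_ | m)
    · exact fun ⟨p, hp⟩ => hp p.start_mem_support
    · rw [hr _ m.succ_pos]; exact (hnext _).2
  have hdist : ∀ m, G.dist b (r m) = m := by
    intro m
    induction m with
    | zero => exact dist_self
    | succ m ih =>
      rw [dist_eq_add_of_not_reachableAvoiding (hconn _ _) (hsep m), ih,
        dist_eq_one_iff_adj.2 (hadj m)]
  exact ⟨r, rfl, rfl, hadj, hdist, hsep⟩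

lemma exists_far_path (hconn : G.Connected) (hcut : ∀ w, G.IsCutVertex w) (F : Finset V)
    {u v : V} (huv : u ≠ v) :
    ∃ a : ℕ → V, (∀ i, G.Adj (a i) (a (i + 1))) ∧ (∀ x ∈ F, StrictMono fun i => G.dist x (a i)) ∧
      (∀ x ∈ F, ∀ i, 2 ≤ G.dist x (a i)) ∧ G.dist (a 0) v < G.dist (a 0) u := by
  obtain ⟨c, hvc, huc⟩ := (hcut v).exists_adj_not_reachableAvoiding hconn u
  obtain ⟨r, hr0, hr1, hadj, hdist, hsep⟩ := exists_ray_of_adj hconn hcut hvc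
  have hr_ne : ∀ {k m}, k ≠ m → r k ≠ r m := fun {k m} h e => h (by rw [← hdist k, e, hdist])
  have hbeyond : ∀ n m, n < m → ¬ G.ReachableAvoiding (r n) v (r m) := fun n m hnm h =>
    hsep n (h.trans (reachableAvoiding_of_adj_seq hadj hnm fun k hk _ => hr_ne (by omega)).symm)
  -- `r N` lies beyond all of `F`, so it separates each `x ∈ F` from the ray after it.
  set N := F.sup (G.dist v) + 1
  have hxN : ∀ x ∈ F, G.dist v x < N := fun x hx => Nat.lt_succ_of_le (le_sup hx)
  have hdist_far : ∀ x ∈ F, ∀ m, N < m → G.dist x (r m) = G.dist x (r N) + (m - N) := by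
    intro x hx m hm
    have hxv : G.ReachableAvoiding (r N) v x :=
      reachableAvoiding_of_dist_lt (hconn v x) (by rw [hdist]; exact hxN x hx)
    have hx_split := dist_eq_add_of_not_reachableAvoiding (hconn x (r m))
      fun h => hbeyond N m hm (hxv.trans h)
    have hv_split := dist_eq_add_of_not_reachableAvoiding (hconn v (r m)) (hbeyond N m hm)
    rw [hdist, hdist] at hv_split
    omega
  refine ⟨fun i => r (N + 1 + i), fun i => hadj _, fun x hx i j hij => ?_, fun x hx i => ?_, ?_⟩
  · simp only [hdist_far x hx (N + 1 + i) (by omega), hdist_far x hx (N + 1 + j) (by omega)]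
    omega
  · have hxr : x ≠ r N := fun h => by have := hxN x hx; rw [h, hdist] at this; omega
    rw [hdist_far x hx _ (by omega)]
    have := (hconn x (r N)).pos_dist_of_ne hxr
    omega
  · have hray : G.ReachableAvoiding v (r 1) (r (N + 1)) :=
      reachableAvoiding_of_adj_seq hadj (by omega) fun k hk _ => hr0 ▸ hr_ne (by omega)
    have hside : ¬ G.ReachableAvoiding v (r (N + 1)) u := fun h => huc (hr1 ▸ (hray.trans h).symm)
    show G.dist (r (N + 1 + 0)) v < G.dist (r (N + 1 + 0)) u
    rw [add_zero, dist_eq_add_of_not_reachableAvoiding (hconn _ _) hside]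
    have := (hconn v u).pos_dist_of_ne huv.symm
    omega

/-- The `k`-th path is `path k 0, …, path k k`; the values `path k i` with `k < i` play no role. -/
structure DistinguishingPaths (G : SimpleGraph V) where
  path : ℕ → ℕ → V
  adj : ∀ k i, G.Adj (path k i) (path k (i + 1))
  two_le_dist : ∀ j k, j < k → ∀ i ≤ j, ∀ i', 2 ≤ G.dist (path j i) (path k i')
  strictMono_dist : ∀ k, 0 < k → StrictMono fun i => G.dist (path 0 0) (path k i)
  exists_dist_lt : ∀ u v, u ≠ v → ∃ k, G.dist (path k 0) v < G.dist (path k 0) u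

namespace DistinguishingPaths

variable (P : G.DistinguishingPaths)

def marked : Set V := {x | ∃ k, ∃ i ≤ k, P.path k i = x}

variable {P} {j k i i' : ℕ}

lemma two_le_dist_of_ne (hjk : j ≠ k) (hi : i ≤ j) (hi' : i' ≤ k) :
    2 ≤ G.dist (P.path j i) (P.path k i') := by
  rcases hjk.lt_or_gt with h | h
  · exact P.two_le_dist j k h i hi i'
  · rw [dist_comm]; exact P.two_le_dist k j h i' hi' i

lemma path_ne (hjk : j ≠ k) (hi : i ≤ j) (hi' : i' ≤ k) : P.path j i ≠ P.path k i' := by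
  intro h
  have := two_le_dist_of_ne (P := P) hjk hi hi'
  rw [h, dist_self] at this
  omega

lemma not_adj (hjk : j ≠ k) (hi : i ≤ j) (hi' : i' ≤ k) : ¬ G.Adj (P.path j i) (P.path k i') := by
  intro h
  have := two_le_dist_of_ne (P := P) hjk hi hi'
  rw [dist_eq_one_iff_adj.2 h] at this
  omega

variable (P) in
lemma injOn_path (k : ℕ) : Set.InjOn (P.path k) (Iic k) := by
  rcases k.eq_zero_or_pos with rfl | hk
  · simp [Set.InjOn]
  · exact (Function.Injective.of_comp (f := G.dist (P.path 0 0))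
      (P.strictMono_dist k hk).injective).injOn

variable {g : G ≃g G}

lemma exists_mapsTo_path (hg : ∀ x, g x ∈ P.marked ↔ x ∈ P.marked) (k : ℕ) :
    ∃ k', ∀ i ≤ k, ∃ i' ≤ k', g (P.path k i) = P.path k' i' := by
  obtain ⟨k', i₀, hi₀, h₀⟩ := (hg _).2 ⟨k, 0, Nat.zero_le _, rfl⟩
  refine ⟨k', fun i hi => ?_⟩
  induction i with
  | zero => exact ⟨i₀, hi₀, h₀.symm⟩
  | succ i ih =>
    obtain ⟨i', hi', hgi⟩ := ih (by omega)
    obtain ⟨k'', i'', hi'', hgi'⟩ := (hg _).2 ⟨k, i + 1, hi, rfl⟩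
    have hadj : G.Adj (P.path k' i') (P.path k'' i'') := by
      rw [← hgi, hgi']; exact g.map_adj_iff.2 (P.adj k i)
    obtain rfl : k'' = k' := by
      by_contra h
      exact not_adj (Ne.symm h) hi' hi'' hadj
    exact ⟨i'', hi'', hgi'.symm⟩

lemma le_of_mapsTo_path (hmaps : ∀ i ≤ k, ∃ i' ≤ j, g (P.path k i) = P.path j i') : k ≤ j := by
  classical
  have hsub : (Iic k).image (g ∘ P.path k) ⊆ (Iic j).image (P.path j) := by
    intro x hx
    obtain ⟨i, hi, rfl⟩ := mem_image.1 hx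
    obtain ⟨i', hi', h⟩ := hmaps i (mem_Iic.1 hi)
    exact mem_image.2 ⟨i', mem_Iic.2 hi', h.symm⟩
  have := (card_le_card hsub).trans card_image_le
  rwa [card_image_of_injOn (g.injective.comp_injOn (P.injOn_path k)), Nat.card_Iic,
    Nat.card_Iic, add_le_add_iff_right] at this

lemma mapsTo_path (hg : ∀ x, g x ∈ P.marked ↔ x ∈ P.marked) (k : ℕ) :
    ∀ i ≤ k, ∃ i' ≤ k, g (P.path k i) = P.path k i' := by
  obtain ⟨k', hk'⟩ := exists_mapsTo_path hg k
  have hg_symm : ∀ x, g.symm x ∈ P.marked ↔ x ∈ P.marked := fun x => by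
    simpa using (hg (g.symm x)).symm
  obtain ⟨k'', hk''⟩ := exists_mapsTo_path hg_symm k'
  obtain ⟨i₁, hi₁, h₁⟩ := hk' 0 (Nat.zero_le _)
  obtain ⟨i₂, hi₂, h₂⟩ := hk'' i₁ hi₁
  rw [← h₁, RelIso.symm_apply_apply] at h₂
  obtain rfl : k'' = k := by
    by_contra h
    exact path_ne (Ne.symm h) (Nat.zero_le _) hi₂ h₂
  obtain rfl : k' = k'' := le_antisymm (le_of_mapsTo_path hk'') (le_of_mapsTo_path hk')
  exact hk'

lemma map_path (hg : ∀ x, g x ∈ P.marked ↔ x ∈ P.marked) (hi : i ≤ k) :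
    g (P.path k i) = P.path k i := by
  have h₀ : g (P.path 0 0) = P.path 0 0 := by
    obtain ⟨i', hi', h⟩ := mapsTo_path hg 0 0 le_rfl
    rwa [Nat.le_zero.1 hi'] at h
  rcases k.eq_zero_or_pos with rfl | hk
  · rwa [Nat.le_zero.1 hi]
  obtain ⟨i', -, h⟩ := mapsTo_path hg k i hi
  have hdist := g.dist_eq (P.path 0 0) (P.path k i)
  rw [h₀, h] at hdist
  rw [h, (P.strictMono_dist k hk).injective hdist]

theorem eq_of_map_marked (hg : ∀ x, g x ∈ P.marked ↔ x ∈ P.marked) (v : V) : g v = v := by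
  by_contra hv
  obtain ⟨k, hk⟩ := P.exists_dist_lt (g v) v hv
  have hdist := g.dist_eq (P.path k 0) v
  rw [map_path hg (Nat.zero_le k)] at hdist
  exact hk.ne' hdist

end DistinguishingPaths

theorem exists_distinguishingPaths [Countable V] [Nontrivial V] (hconn : G.Connected)
    (hcut : ∀ w, G.IsCutVertex w) : Nonempty G.DistinguishingPaths := by
  classical
  obtain ⟨x, y, hxy⟩ := exists_pair_ne V
  have : Nonempty {p : V × V // p.1 ≠ p.2} := ⟨⟨(x, y), hxy⟩⟩
  obtain ⟨e, he⟩ := exists_surjective_nat {p : V × V // p.1 ≠ p.2}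
  obtain ⟨A, hA⟩ := exists_seq_of_forall_finset fun F k => exists_far_path hconn hcut F (e k).2
  have hmem : ∀ j k, j < k → ∀ i ≤ j, A j i ∈ (range k).biUnion fun j => (Iic j).image (A j) :=
    fun j k hjk i hi => mem_biUnion.2 ⟨j, mem_range.2 hjk, mem_image.2 ⟨i, mem_Iic.2 hi, rfl⟩⟩
  refine ⟨{ path := A
            adj := fun k => (hA k).1
            two_le_dist := fun j k hjk i hi => (hA k).2.2.1 _ (hmem j k hjk i hi)
            strictMono_dist := fun k hk => (hA k).2.1 _ (hmem 0 k hk 0 le_rfl)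
            exists_dist_lt := fun u v huv => ?_ }⟩
  obtain ⟨k, hk⟩ := he ⟨(u, v), huv⟩
  exact ⟨k, by simpa [hk] using (hA k).2.2.2⟩

end SimpleGraph

lemma distinguishingNumber_eq_two {V : Type*} [Nontrivial V] {G : SimpleGraph V}
    (htrans : ∀ u v : V, ∃ g : G ≃g G, g u = v) (S : Set V)
    (hS : ∀ g : G ≃g G, (∀ x, g x ∈ S ↔ x ∈ S) → ∀ v, g v = v) :
    distinguishingNumber G = 2 := by
  classical
  have h2 : ∃ c : V → Fin 2, ∀ g : G ≃g G, (∀ v, c (g v) = c v) → ∀ v, g v = v := by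
    refine ⟨fun x => if x ∈ S then 1 else 0, fun g hg => hS g fun x => ?_⟩
    have := hg x
    simp only at this
    split_ifs at this <;> simp_all
  refine le_antisymm (Nat.sInf_le h2) (le_csInf ⟨2, h2⟩ fun n ⟨c, hc⟩ => ?_)
  obtain ⟨x, y, hxy⟩ := exists_pair_ne V
  obtain ⟨g, rfl⟩ := htrans x y
  by_contra! hn
  interval_cases n
  · exact (c x).elim0
  · exact hxy (hc g (fun _ => Subsingleton.elim _ _) x).symm

/-- Every denumerable vertex-transitive graph of connectivity 1 (connected with a cut
vertex) has distinguishing number 2. -/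
theorem stmt7 {V : Type*} [Countable V] [Infinite V] (G : SimpleGraph V)
    (hconn : G.Connected)
    (htrans : ∀ u v : V, ∃ g : G ≃g G, g u = v)
    (hcut : ∃ δ : V, ¬ (G.induce {v : V | v ≠ δ}).Connected) :
    distinguishingNumber G = 2 := by
  obtain ⟨δ, hδ⟩ := hcut
  have hcut_all : ∀ w, G.IsCutVertex w := fun w => by
    obtain ⟨g, rfl⟩ := htrans δ w
    exact (SimpleGraph.isCutVertex_of_not_connected_induce hδ).map g
  obtain ⟨P⟩ := SimpleGraph.exists_distinguishingPaths hconn hcut_all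
  exact distinguishingNumber_eq_two htrans P.marked fun g hg => P.eq_of_map_marked hg
end
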